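/- For n ≥ k ≥ n/2, the number of walks on ℤ of length n with steps ±1, starting at 0, that never visit a negative number and end at a value ≥ 2k−n, equals C(n,k). -/

import Mathlib

/-!
Let `B(n, h)` be the number of positive walks of length `n` ending at height `≥ h`. Conditioning on
the last step gives `B(n + 1, h) = B(n, h - 1) + B(n, h + 1)` for `h ≥ 0` (a final down-step from
height `≥ h + 1 ≥ 1` stays nonnegative), which at `h = 2k - n` is Pascal's rule. The only boundary
case, `n = 2k + 1` where `2k - n = -1`, is settled by parity: an odd nonnegative end point is `≥ 1`,
so `B(2k + 1, -1) = B(2k + 1, 1) = C(2k + 1, k + 1) = C(2k + 1, k)`.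
-/

def psum {n : ℕ} (w : Fin n → ℤ) (k : ℕ) : ℤ :=
  ∑ i ∈ Finset.univ.filter (fun i : Fin n => (i : ℕ) < k), w i

section Walks

variable {n : ℕ}

theorem psum_of_le (w : Fin n → ℤ) {m : ℕ} (hm : n ≤ m) : psum w m = ∑ i, w i := by
  rw [psum, Finset.filter_true_of_mem fun i _ => i.isLt.trans_le hm]

theorem psum_snoc (w : Fin n → ℤ) (a : ℤ) (m : ℕ) :
    psum (Fin.snoc w a : Fin (n + 1) → ℤ) m = psum w m + if n < m then a else 0 := by
  simp only [psum, Finset.sum_filter, Fin.sum_univ_castSucc, Fin.snoc_castSucc, Fin.snoc_last,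
    Fin.val_castSucc, Fin.val_last]

theorem even_psum_sub {w : Fin n → ℤ} (hw : ∀ i, w i = 1 ∨ w i = -1) : Even (psum w n - n) := by
  rw [psum_of_le w le_rfl, show (n : ℤ) = ∑ _ : Fin n, (1 : ℤ) by simp, ← Finset.sum_sub_distrib]
  refine Finset.even_sum _ fun i _ => ?_
  rcases hw i with hi | hi <;> simp [hi]

def positiveWalks (n : ℕ) (h : ℤ) : Set (Fin n → ℤ) :=
  {w | (∀ i, w i = 1 ∨ w i = -1) ∧ (∀ m, 0 ≤ psum w m) ∧ h ≤ psum w n}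

theorem ncard_positiveWalks_zero (h : ℤ) :
    (positiveWalks 0 h).ncard = if h ≤ 0 then 1 else 0 := by
  have hpsum (w : Fin 0 → ℤ) (m : ℕ) : psum w m = 0 := by simp [psum]
  split_ifs with hh
  · rw [Set.ncard_eq_one]
    exact ⟨Fin.elim0, Set.eq_singleton_iff_unique_mem.2
      ⟨by simp [positiveWalks, hpsum, hh], fun w _ => Subsingleton.elim _ _⟩⟩
  · rw [Set.ncard_eq_zero, Set.eq_empty_iff_forall_notMem]
    simp [positiveWalks, hpsum, hh]

theorem positiveWalks_neg_one_eq_one_of_odd (hn : Odd n) :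
    positiveWalks n (-1) = positiveWalks n 1 := by
  ext w
  refine and_congr_right fun hw => and_congr_right fun hpos => ?_
  have hodd : Odd (psum w n) := by simpa using (even_psum_sub hw).add_odd (hn.natCast (R := ℤ))
  have := hpos n
  constructor <;> intro <;> rcases hodd with ⟨j, hj⟩ <;> omega

theorem finite_positiveWalks (h : ℤ) : (positiveWalks n h).Finite :=
  (Set.Finite.pi fun _ => Set.toFinite {1, -1}).subset fun _ hw i _ => hw.1 i

theorem snoc_mem_positiveWalks_iff {h : ℤ} (hh : 0 ≤ h) (w : Fin n → ℤ) (a : ℤ) :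
    (Fin.snoc w a : Fin (n + 1) → ℤ) ∈ positiveWalks (n + 1) h ↔
      w ∈ positiveWalks n (h - a) ∧ (a = 1 ∨ a = -1) := by
  have hpsum (m : ℕ) (hm : n < m) : psum (Fin.snoc w a : Fin (n + 1) → ℤ) m = psum w n + a := by
    rw [psum_snoc, if_pos hm, psum_of_le w hm.le, psum_of_le w le_rfl]
  simp only [positiveWalks, Set.mem_ofPred_eq, Fin.forall_fin_succ', Fin.snoc_castSucc,
    Fin.snoc_last, hpsum (n + 1) n.lt_succ_self]
  constructor
  · rintro ⟨⟨hw, ha⟩, hpos, hend⟩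
    refine ⟨⟨hw, fun m => ?_, by linarith⟩, ha⟩
    rcases le_or_gt m n with hm | hm
    · simpa [psum_snoc, hm.not_gt] using hpos m
    · simpa [psum_snoc, psum_of_le w hm.le, psum_of_le w le_rfl] using hpos n
  · rintro ⟨⟨hw, hpos, hend⟩, ha⟩
    refine ⟨⟨hw, ha⟩, fun m => ?_, by linarith⟩
    rcases le_or_gt m n with hm | hm
    · simpa [psum_snoc, hm.not_gt] using hpos m
    · rw [hpsum m hm]; linarith

theorem positiveWalks_succ {h : ℤ} (hh : 0 ≤ h) :
    positiveWalks (n + 1) h =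
      (Fin.snoc · 1) '' positiveWalks n (h - 1) ∪ (Fin.snoc · (-1)) '' positiveWalks n (h + 1) := by
  ext v
  obtain ⟨w, a, rfl⟩ : ∃ w a, v = Fin.snoc w a :=
    ⟨Fin.init v, v (Fin.last n), (Fin.snoc_init_self v).symm⟩
  simp only [snoc_mem_positiveWalks_iff hh, Set.mem_union, Set.mem_image,
    Fin.snoc_injective2.eq_iff]
  constructor
  · rintro ⟨hw, rfl | rfl⟩
    · exact .inl ⟨w, hw, rfl, rfl⟩
    · exact .inr ⟨w, by simpa using hw, rfl, rfl⟩
  · rintro (⟨w, hw, rfl, rfl⟩ | ⟨w, hw, rfl, rfl⟩)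
    · exact ⟨hw, .inl rfl⟩
    · exact ⟨by simpa using hw, .inr rfl⟩

theorem ncard_positiveWalks_succ {h : ℤ} (hh : 0 ≤ h) :
    (positiveWalks (n + 1) h).ncard =
      (positiveWalks n (h - 1)).ncard + (positiveWalks n (h + 1)).ncard := by
  have hdisj : Disjoint ((Fin.snoc · 1) '' positiveWalks n (h - 1))
      ((Fin.snoc · (-1)) '' positiveWalks n (h + 1) : Set (Fin (n + 1) → ℤ)) := by
    rw [Set.disjoint_left]
    rintro _ ⟨w, _, rfl⟩ ⟨w', _, hw'⟩
    simpa using congrFun hw' (Fin.last n)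
  rw [positiveWalks_succ hh, Set.ncard_union_eq hdisj ((finite_positiveWalks _).image _)
      ((finite_positiveWalks _).image _),
    Set.ncard_image_of_injective _ (Fin.snoc_left_injective (α := fun _ => ℤ) _),
    Set.ncard_image_of_injective _ (Fin.snoc_left_injective (α := fun _ => ℤ) _)]

theorem ncard_positiveWalks_two_mul_sub (k : ℕ) (hnk : n ≤ 2 * k) :
    (positiveWalks n (2 * k - n)).ncard = n.choose k := by
  induction n generalizing k with
  | zero => cases k <;> simp [ncard_positiveWalks_zero]
  | succ n ih =>
    obtain ⟨k, rfl⟩ : ∃ k', k = k' + 1 := ⟨k - 1, by omega⟩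
    have hlow : 2 * ((k + 1 : ℕ) : ℤ) - (n + 1 : ℕ) - 1 = 2 * k - n := by push_cast; ring
    have hhigh : 2 * ((k + 1 : ℕ) : ℤ) - (n + 1 : ℕ) + 1 = 2 * (k + 1 : ℕ) - n := by
      push_cast; ring
    rw [ncard_positiveWalks_succ (by push_cast; omega), hlow, hhigh, ih (k + 1) (by omega),
      Nat.choose_succ_succ']
    congr 1
    rcases le_or_gt n (2 * k) with hle | hlt
    · exact ih k hle
    · obtain rfl : n = 2 * k + 1 := by omega
      have hone := ih (k + 1) (by omega)
      rw [show 2 * ((k + 1 : ℕ) : ℤ) - (2 * k + 1 : ℕ) = 1 by push_cast; ring] at hone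
      rw [show 2 * (k : ℤ) - (2 * k + 1 : ℕ) = -1 by push_cast; ring,
        positiveWalks_neg_one_eq_one_of_odd (odd_two_mul_add_one k), hone, Nat.choose_symm_half]

end Walks

theorem stmt3_general (n k : ℕ) (hk2 : n ≤ 2 * k) :
    {w : Fin n → ℤ |
        (∀ i, w i = 1 ∨ w i = -1) ∧ (∀ m, 0 ≤ psum w m) ∧
          2 * (k : ℤ) - n ≤ psum w n}.ncard
      = Nat.choose n k :=
  ncard_positiveWalks_two_mul_sub k hk2

theorem stmt3 (n k : ℕ) (hk : k ≤ n) (hk2 : n ≤ 2 * k) :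
    {w : Fin n → ℤ |
        (∀ i, w i = 1 ∨ w i = -1) ∧ (∀ m, 0 ≤ psum w m) ∧
          2 * (k : ℤ) - n ≤ psum w n}.ncard
      = Nat.choose n k :=
  stmt3_general n k hk2
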